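/- Let R be a Prüfer domain and let φ : E → H be an R-linear map between finitely generated projective R-modules. Then the image of φ is isomorphic, as an R-module, to a finite direct sum ⊕_{i=1}^r I_i of nonzero finitely generated ideals of R; in particular, the image of φ is a finitely generated projective R-module. -/

import Mathlib

/-!
A nonzero finitely generated ideal `I` with `I * J = (c)` is an invertible fractional ideal
(with inverse `c⁻¹ J`), hence projective. A finitely generated submodule `M ⊆ Rⁿ⁺¹` maps onto
the ideal of its first coordinates; since that ideal is projective the map splits,
`M ≅ ker × I₀`, and the kernel is a finitely generated submodule of `Rⁿ`. Induction on `n`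
writes every finitely generated submodule of `Rⁿ` as a product of nonzero finitely generated
ideals, which is projective. The image of `φ` is such a submodule, since `H` embeds into
some `Rⁿ`.
-/

open LinearMap

theorem Ideal.projective_of_mul_eq_span_singleton {R : Type*} [CommRing R] {I J : Ideal R} {c : R}
    (hc : c ∈ nonZeroDivisors R) (hIJ : I * J = Ideal.span {c}) : Module.Projective R I := by
  let ι := (Algebra.ofId R (FractionRing R)).toLinearMap
  obtain ⟨u, hu⟩ := IsLocalization.map_units (FractionRing R) (⟨c, hc⟩ : nonZeroDivisors R)
  have hunit : IsUnit (Submodule.map ι I) := by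
    refine IsUnit.of_mul_eq_one
      (Submodule.span R {((u⁻¹ : _ˣ) : FractionRing R)} * Submodule.map ι J) ?_
    rw [mul_left_comm, ← Submodule.map_mul, hIJ, Ideal.span, Submodule.map_span,
      Set.image_singleton, Submodule.span_mul_span, Set.singleton_mul_singleton]
    simp [← hu, Submodule.one_eq_span]
  have := Submodule.projective_of_isUnit hunit
  exact Module.Projective.of_equiv
    (Submodule.equivMapOfInjective ι (IsFractionRing.injective R (FractionRing R)) I).symm

theorem LinearMap.nonempty_equiv_ker_prod_of_surjective {R M P : Type*} [Ring R]
    [AddCommGroup M] [Module R M] [AddCommGroup P] [Module R P] [Module.Projective R P]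
    (g : M →ₗ[R] P) (hg : Function.Surjective g) : Nonempty (M ≃ₗ[R] ker g × P) :=
  have ⟨l, hl⟩ := Module.projective_lifting_property g .id hg
  ⟨((exact_subtype_ker_map g).splitSurjectiveEquiv (ker g).injective_subtype ⟨l, hl⟩).1⟩

def IsPiNonzeroFGIdeals (R M : Type*) [CommRing R] [AddCommGroup M] [Module R M] : Prop :=
  ∃ (r : ℕ) (I : Fin r → Ideal R), (∀ i, (I i).FG ∧ I i ≠ ⊥) ∧
    Nonempty (M ≃ₗ[R] ((i : Fin r) → I i))

namespace IsPiNonzeroFGIdeals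

variable {R M N : Type*} [CommRing R] [AddCommGroup M] [Module R M] [AddCommGroup N] [Module R N]

theorem of_linearEquiv (e : M ≃ₗ[R] N) (h : IsPiNonzeroFGIdeals R N) : IsPiNonzeroFGIdeals R M :=
  have ⟨r, I, hI, ⟨e'⟩⟩ := h
  ⟨r, I, hI, ⟨e.trans e'⟩⟩

theorem of_subsingleton [Subsingleton M] : IsPiNonzeroFGIdeals R M :=
  ⟨0, Fin.elim0, fun i => i.elim0, ⟨LinearEquiv.ofSubsingleton _ _⟩⟩

theorem ideal_prod (h : IsPiNonzeroFGIdeals R M) {I : Ideal R} (hI : I.FG) :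
    IsPiNonzeroFGIdeals R (I × M) := by
  rcases eq_or_ne I ⊥ with rfl | hI₀
  · exact h.of_linearEquiv (LinearEquiv.uniqueProd (M₂ := (⊥ : Ideal R)))
  obtain ⟨r, Is, hIs, ⟨e⟩⟩ := h
  let I' : Fin (r + 1) → Ideal R := Fin.cons I Is
  exact ⟨r + 1, I', Fin.cases ⟨hI, hI₀⟩ hIs,
    ⟨((LinearEquiv.refl R I).prodCongr e).trans (Fin.consLinearEquiv R fun i => I' i)⟩⟩

theorem projective (hproj : ∀ I : Ideal R, I.FG → Module.Projective R I)
    (h : IsPiNonzeroFGIdeals R M) : Module.Projective R M := by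
  obtain ⟨r, I, hI, ⟨e⟩⟩ := h
  have (i : Fin r) : Module.Projective R (I i) := hproj _ (hI i).1
  exact .of_equiv ((DirectSum.linearEquivFunOnFintype R (Fin r) fun i => I i).trans e.symm)

end IsPiNonzeroFGIdeals

theorem isPiNonzeroFGIdeals_of_injective {R : Type*} [CommRing R]
    (hproj : ∀ I : Ideal R, I.FG → Module.Projective R I) {n : ℕ} {M : Type*} [AddCommGroup M]
    [Module R M] [Module.Finite R M] (f : M →ₗ[R] Fin n → R) (hf : Function.Injective f) :
    IsPiNonzeroFGIdeals R M := by
  induction n generalizing M with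
  | zero =>
    have : Subsingleton M := hf.subsingleton
    exact .of_subsingleton
  | succ n ih =>
    let q := (proj 0 ∘ₗ f).rangeRestrict
    have hfg : (range (proj 0 ∘ₗ f)).FG := Module.Finite.iff_fg.mp inferInstance
    have := hproj _ hfg
    obtain ⟨e⟩ := nonempty_equiv_ker_prod_of_surjective q (proj 0 ∘ₗ f).surjective_rangeRestrict
    have : Module.Finite R (ker q) :=
      .of_surjective (fst R _ _ ∘ₗ e.toLinearMap) (Prod.fst_surjective.comp e.surjective)
    have hker : Function.Injective (funLeft R R Fin.succ ∘ₗ f ∘ₗ (ker q).subtype) := by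
      intro x y hxy
      have h0 (z : ker q) : f z 0 = 0 := congrArg Subtype.val z.2
      refine Subtype.ext (hf (funext (Fin.cases ?_ (congrFun hxy))))
      rw [h0, h0]
    exact ((ih _ hker).ideal_prod hfg).of_linearEquiv (e.trans (LinearEquiv.prodComm R _ _))

theorem stmt_7_general {R : Type*} [CommRing R] [IsDomain R]
    (hpruf : ∀ I : Ideal R, I.FG → I ≠ ⊥ →
      ∃ (J : Ideal R) (c : R), J.FG ∧ c ≠ 0 ∧ I * J = Ideal.span {c})
    {E H : Type*} [AddCommGroup E] [Module R E] [AddCommGroup H] [Module R H]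
    [Module.Finite R E]
    [Module.Finite R H] [Module.Projective R H]
    (φ : E →ₗ[R] H) :
    (∃ (r : ℕ) (I : Fin r → Ideal R),
      (∀ i, (I i).FG ∧ I i ≠ ⊥) ∧
      Nonempty (↥(LinearMap.range φ) ≃ₗ[R] ((i : Fin r) → ↥(I i)))) ∧
    Module.Finite R ↥(LinearMap.range φ) ∧
    Module.Projective R ↥(LinearMap.range φ) := by
  have hproj (I : Ideal R) (hI : I.FG) : Module.Projective R I := by
    rcases eq_or_ne I ⊥ with rfl | hI₀
    · infer_instance
    obtain ⟨J, c, -, hc, hIJ⟩ := hpruf I hI hI₀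
    exact Ideal.projective_of_mul_eq_span_singleton (mem_nonZeroDivisors_of_ne_zero hc) hIJ
  obtain ⟨n, -, g, -, hg, -⟩ := Module.Finite.exists_comp_eq_id_of_projective R H
  have h : IsPiNonzeroFGIdeals R (range φ) :=
    isPiNonzeroFGIdeals_of_injective hproj (g ∘ₗ (range φ).subtype)
      (hg.comp (range φ).injective_subtype)
  exact ⟨h, inferInstance, h.projective hproj⟩

/-- Over a Prüfer domain, the image of a linear map between finitely generated
projective modules is isomorphic to a finite direct sum of nonzero finitely generated
ideals; in particular it is finitely generated projective. -/
theorem stmt_7 {R : Type*} [CommRing R] [IsDomain R]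
    (hpruf : ∀ I : Ideal R, I.FG → I ≠ ⊥ →
      ∃ (J : Ideal R) (c : R), J.FG ∧ c ≠ 0 ∧ I * J = Ideal.span {c})
    {E H : Type*} [AddCommGroup E] [Module R E] [AddCommGroup H] [Module R H]
    [Module.Finite R E] [Module.Projective R E]
    [Module.Finite R H] [Module.Projective R H]
    (φ : E →ₗ[R] H) :
    (∃ (r : ℕ) (I : Fin r → Ideal R),
      (∀ i, (I i).FG ∧ I i ≠ ⊥) ∧
      Nonempty (↥(LinearMap.range φ) ≃ₗ[R] ((i : Fin r) → ↥(I i)))) ∧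
    Module.Finite R ↥(LinearMap.range φ) ∧
    Module.Projective R ↥(LinearMap.range φ) :=
  stmt_7_general hpruf φ
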